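/- Let m : ℝ^{d_m}-valued zero-mean square-integrable random vector, D = E[∂_ν m] a d_m×d_ν full-column-rank matrix, and Ξ a symmetric matrix with DᵀΞD invertible. Define the influence function φ_Ξ = −(DᵀΞD)⁻¹DᵀΞ m. Then Var(φ_Ξ) = (DᵀΞD)⁻¹DᵀΞ V Ξᵀ D(DᵀΞD)⁻¹ where V = E[m mᵀ], and for any such Ξ, Var(φ_Ξ) − (Dᵀ V⁺ D)⁻¹ is positive semidefinite provided the column space of D lies in the column space of V; moreover equality holds when Ξ = V⁺. -/

import Mathlib

open Matrix MeasureTheory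

/-- The four Penrose conditions characterizing the Moore–Penrose pseudoinverse. -/
def IsMoorePenrose {m n : Type*} [Fintype m] [Fintype n]
    (A : Matrix m n ℝ) (B : Matrix n m ℝ) : Prop :=
  A * B * A = A ∧ B * A * B = B ∧ (A * B)ᵀ = A * B ∧ (B * A)ᵀ = B * A

/-- Cross-covariance matrix `E[f gᵀ]` of two (zero-mean) random vectors. -/
noncomputable def cov {Ω : Type*} [MeasurableSpace Ω] (P : Measure Ω) {a b : ℕ}
    (f : Ω → Fin a → ℝ) (g : Ω → Fin b → ℝ) : Matrix (Fin a) (Fin b) ℝ :=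
  Matrix.of fun i j => ∫ ω, f ω i * g ω j ∂P

section Aux
variable {Ω : Type*} [MeasurableSpace Ω] {P : Measure Ω} {dm : ℕ} {m : Ω → Fin dm → ℝ}

lemma integ_mul (hm2 : ∀ i, MemLp (fun ω => m ω i) 2 P) (k l : Fin dm) :
    Integrable (fun ω => m ω k * m ω l) P := by
  rw [← memLp_one_iff_integrable]
  have := ((hm2 l).smul (hm2 k) (r := 1) :
    MemLp ((fun ω => m ω k) • (fun ω => m ω l)) 1 P)
  exact this

lemma cov_mulVec (hm2 : ∀ i, MemLp (fun ω => m ω i) 2 P) {a b : ℕ}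
    (A : Matrix (Fin a) (Fin dm) ℝ) (B : Matrix (Fin b) (Fin dm) ℝ) :
    cov P (fun ω => A.mulVec (m ω)) (fun ω => B.mulVec (m ω)) = A * cov P m m * Bᵀ := by
  ext i j
  simp only [cov, of_apply, mulVec, dotProduct]
  have h : ∀ ω, (∑ k, A i k * m ω k) * (∑ l, B j l * m ω l)
      = ∑ k, ∑ l, A i k * B j l * (m ω k * m ω l) := by
    intro ω
    rw [Finset.sum_mul_sum]
    exact Finset.sum_congr rfl fun k _ => Finset.sum_congr rfl fun l _ => by ring
  simp_rw [h]
  rw [integral_finset_sum _ (fun k _ =>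
    integrable_finset_sum _ (fun l _ => ((integ_mul hm2 k l).const_mul _)))]
  simp_rw [integral_finset_sum _ (fun l _ => ((integ_mul hm2 _ l).const_mul _)),
    integral_const_mul]
  simp only [Matrix.mul_apply, cov, of_apply, transpose_apply, Finset.sum_mul]
  rw [Finset.sum_comm]
  exact Finset.sum_congr rfl fun l _ => Finset.sum_congr rfl fun k _ => by ring

lemma cov_neg_mulVec (hm2 : ∀ i, MemLp (fun ω => m ω i) 2 P) {a : ℕ}
    (A : Matrix (Fin a) (Fin dm) ℝ) :
    cov P (fun ω => -(A.mulVec (m ω))) (fun ω => -(A.mulVec (m ω))) = A * cov P m m * Aᵀ := by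
  have : ∀ ω, -(A.mulVec (m ω)) = (-A).mulVec (m ω) := fun ω => (Matrix.neg_mulVec _ _).symm
  simp_rw [this, cov_mulVec hm2]
  simp [Matrix.neg_mul, Matrix.mul_neg]

lemma cov_self_symm : (cov P m m)ᵀ = cov P m m := by
  ext i j; simp [cov, mul_comm]

lemma cov_self_posSemidef (hm2 : ∀ i, MemLp (fun ω => m ω i) 2 P) :
    (cov P m m).PosSemidef := by
  rw [posSemidef_iff_dotProduct_mulVec]
  constructor
  · show (cov P m m)ᴴ = cov P m m
    rw [conjTranspose_eq_transpose_of_trivial]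
    exact cov_self_symm
  · intro x
    set R : Matrix (Fin 1) (Fin dm) ℝ := Matrix.of fun _ j => x j with hR
    have hc := cov_mulVec hm2 R R
    have h1 : star x ⬝ᵥ (cov P m m).mulVec x = (R * cov P m m * Rᵀ) 0 0 := by
      simp only [Matrix.mul_apply, transpose_apply, hR, of_apply, dotProduct, mulVec,
        dotProduct, star_trivial, Finset.sum_mul, Finset.mul_sum]
      rw [Finset.sum_comm]
      exact Finset.sum_congr rfl fun l _ => Finset.sum_congr rfl fun k _ => by ring
    rw [h1, ← hc]
    simp only [cov, of_apply]
    exact integral_nonneg fun ω => mul_self_nonneg _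

lemma mp_unique {n : ℕ} {A B C : Matrix (Fin n) (Fin n) ℝ}
    (hB : IsMoorePenrose A B) (hC : IsMoorePenrose A C) : B = C := by
  obtain ⟨hB1, hB2, hB3, hB4⟩ := hB
  obtain ⟨hC1, hC2, hC3, hC4⟩ := hC
  have hAB : A * B = A * C := by
    calc A * B = (A * B)ᵀ := hB3.symm
    _ = ((A * C * A) * B)ᵀ := by rw [hC1]
    _ = (A * B)ᵀ * (A * C)ᵀ := by simp only [transpose_mul]; noncomm_ring
    _ = (A * B) * (A * C) := by rw [hB3, hC3]
    _ = (A * B * A) * C := by noncomm_ring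
    _ = A * C := by rw [hB1]
  have hBA : B * A = C * A := by
    calc B * A = (B * A)ᵀ := hB4.symm
    _ = (B * (A * C * A))ᵀ := by rw [hC1]
    _ = (C * A)ᵀ * (B * A)ᵀ := by simp only [transpose_mul]; noncomm_ring
    _ = (C * A) * (B * A) := by rw [hB4, hC4]
    _ = C * (A * B * A) := by noncomm_ring
    _ = C * A := by rw [hB1]
  calc B = B * A * B := hB2.symm
  _ = C * (A * B) := by rw [hBA]; noncomm_ring
  _ = C * (A * C) := by rw [hAB]
  _ = C * A * C := by noncomm_ring
  _ = C := hC2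

lemma mp_symm {n : ℕ} {A B : Matrix (Fin n) (Fin n) ℝ} (hA : Aᵀ = A)
    (hB : IsMoorePenrose A B) : Bᵀ = B := by
  refine mp_unique ?_ hB
  obtain ⟨h1, h2, h3, h4⟩ := hB
  refine ⟨?_, ?_, ?_, ?_⟩
  · calc A * Bᵀ * A = (Aᵀ * B * Aᵀ)ᵀ := by simp only [transpose_mul, transpose_transpose]; noncomm_ring
    _ = (A * B * A)ᵀ := by rw [hA]
    _ = Aᵀ := by rw [h1]
    _ = A := hA
  · calc Bᵀ * A * Bᵀ = Bᵀ * Aᵀ * Bᵀ := by rw [hA]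
    _ = (B * A * B)ᵀ := by simp only [transpose_mul]; noncomm_ring
    _ = Bᵀ := by rw [h2]
  · calc (A * Bᵀ)ᵀ = B * A := by rw [transpose_mul, transpose_transpose, hA]
    _ = (B * A)ᵀ := h4.symm
    _ = Aᵀ * Bᵀ := by rw [transpose_mul]
    _ = A * Bᵀ := by rw [hA]
  · calc (Bᵀ * A)ᵀ = A * B := by rw [transpose_mul, transpose_transpose, hA]
    _ = (A * B)ᵀ := h3.symm
    _ = Bᵀ * Aᵀ := by rw [transpose_mul]
    _ = Bᵀ * A := by rw [hA]

end Aux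

/-- Optimal GMM weighting with possibly singular variance `V`: the sandwich
variance of `φ_Ξ = −(DᵀΞD)⁻¹DᵀΞ m` equals
`(DᵀΞD)⁻¹DᵀΞ V Ξᵀ D(DᵀΞD)⁻¹`, it dominates `(DᵀV⁺D)⁻¹` in the Loewner order
when `col(D) ⊆ col(V)`, and with `Ξ = V⁺` it attains `(DᵀV⁺D)⁻¹`. -/
theorem optimal_weighting_singular_variance {Ω : Type*} [MeasurableSpace Ω]
    (P : Measure Ω) [IsProbabilityMeasure P] {dm dν : ℕ}
    (m : Ω → Fin dm → ℝ)
    (D : Matrix (Fin dm) (Fin dν) ℝ)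
    (Ξ Vp : Matrix (Fin dm) (Fin dm) ℝ)
    (hm2 : ∀ i, MemLp (fun ω => m ω i) 2 P)
    (hm0 : ∀ i, ∫ ω, m ω i ∂P = 0)
    (hΞsym : Ξᵀ = Ξ)
    (hΞinv : Invertible (Dᵀ * Ξ * D))
    (hDrank : D.rank = dν)
    (hMP : IsMoorePenrose (cov P m m) Vp)
    (hcol : cov P m m * Vp * D = D)
    (hVinv : Invertible (Dᵀ * Vp * D)) :
    cov P (fun ω => -(((Dᵀ * Ξ * D)⁻¹ * Dᵀ * Ξ).mulVec (m ω)))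
        (fun ω => -(((Dᵀ * Ξ * D)⁻¹ * Dᵀ * Ξ).mulVec (m ω))) =
      (Dᵀ * Ξ * D)⁻¹ * Dᵀ * Ξ * cov P m m * Ξᵀ * D * (Dᵀ * Ξ * D)⁻¹ ∧
    (cov P (fun ω => -(((Dᵀ * Ξ * D)⁻¹ * Dᵀ * Ξ).mulVec (m ω)))
        (fun ω => -(((Dᵀ * Ξ * D)⁻¹ * Dᵀ * Ξ).mulVec (m ω))) -
      (Dᵀ * Vp * D)⁻¹).PosSemidef ∧
    cov P (fun ω => -(((Dᵀ * Vp * D)⁻¹ * Dᵀ * Vp).mulVec (m ω)))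
        (fun ω => -(((Dᵀ * Vp * D)⁻¹ * Dᵀ * Vp).mulVec (m ω))) =
      (Dᵀ * Vp * D)⁻¹ := by
  set V := cov P m m with hV
  have hVsym : Vᵀ = V := cov_self_symm
  have hVpsym : Vpᵀ = Vp := mp_symm hVsym hMP
  have hWΞsym : ((Dᵀ * Ξ * D)⁻¹)ᵀ = (Dᵀ * Ξ * D)⁻¹ := by
    rw [Matrix.transpose_nonsing_inv]
    congr 1
    rw [transpose_mul, transpose_mul, transpose_transpose, hΞsym, Matrix.mul_assoc]
  have hWsym : ((Dᵀ * Vp * D)⁻¹)ᵀ = (Dᵀ * Vp * D)⁻¹ := by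
    rw [Matrix.transpose_nonsing_inv]
    congr 1
    rw [transpose_mul, transpose_mul, transpose_transpose, hVpsym, Matrix.mul_assoc]
  have hAVB : (Dᵀ * Ξ * D)⁻¹ * Dᵀ * Ξ * V * ((Dᵀ * Vp * D)⁻¹ * Dᵀ * Vp)ᵀ
      = (Dᵀ * Vp * D)⁻¹ := by
    calc (Dᵀ * Ξ * D)⁻¹ * Dᵀ * Ξ * V * ((Dᵀ * Vp * D)⁻¹ * Dᵀ * Vp)ᵀ
        = (Dᵀ * Ξ * D)⁻¹ * Dᵀ * Ξ * (V * Vp * D) * (Dᵀ * Vp * D)⁻¹ := by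
          rw [transpose_mul, transpose_mul, transpose_transpose, hVpsym, hWsym]
          simp only [Matrix.mul_assoc]
      _ = (Dᵀ * Ξ * D)⁻¹ * (Dᵀ * Ξ * D) * (Dᵀ * Vp * D)⁻¹ := by
          rw [hcol]; simp only [Matrix.mul_assoc]
      _ = (Dᵀ * Vp * D)⁻¹ := by rw [Matrix.inv_mul_of_invertible, Matrix.one_mul]
  have hBVB : (Dᵀ * Vp * D)⁻¹ * Dᵀ * Vp * V * ((Dᵀ * Vp * D)⁻¹ * Dᵀ * Vp)ᵀ
      = (Dᵀ * Vp * D)⁻¹ := by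
    calc (Dᵀ * Vp * D)⁻¹ * Dᵀ * Vp * V * ((Dᵀ * Vp * D)⁻¹ * Dᵀ * Vp)ᵀ
        = (Dᵀ * Vp * D)⁻¹ * Dᵀ * Vp * (V * Vp * D) * (Dᵀ * Vp * D)⁻¹ := by
          rw [transpose_mul, transpose_mul, transpose_transpose, hVpsym, hWsym]
          simp only [Matrix.mul_assoc]
      _ = (Dᵀ * Vp * D)⁻¹ * (Dᵀ * Vp * D) * (Dᵀ * Vp * D)⁻¹ := by
          rw [hcol]; simp only [Matrix.mul_assoc]
      _ = (Dᵀ * Vp * D)⁻¹ := by rw [Matrix.inv_mul_of_invertible, Matrix.one_mul]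
  have hBVA : (Dᵀ * Vp * D)⁻¹ * Dᵀ * Vp * V * ((Dᵀ * Ξ * D)⁻¹ * Dᵀ * Ξ)ᵀ
      = (Dᵀ * Vp * D)⁻¹ := by
    have ht : ((Dᵀ * Ξ * D)⁻¹ * Dᵀ * Ξ * V * ((Dᵀ * Vp * D)⁻¹ * Dᵀ * Vp)ᵀ)ᵀ
        = (Dᵀ * Vp * D)⁻¹ * Dᵀ * Vp * V * ((Dᵀ * Ξ * D)⁻¹ * Dᵀ * Ξ)ᵀ := by
      simp only [transpose_mul, transpose_transpose, hVsym, hVpsym, hΞsym, hWsym, hWΞsym,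
        Matrix.mul_assoc]
    rw [← ht, hAVB, hWsym]
  -- part 1
  have part1 : cov P (fun ω => -(((Dᵀ * Ξ * D)⁻¹ * Dᵀ * Ξ).mulVec (m ω)))
        (fun ω => -(((Dᵀ * Ξ * D)⁻¹ * Dᵀ * Ξ).mulVec (m ω)))
      = (Dᵀ * Ξ * D)⁻¹ * Dᵀ * Ξ * V * Ξᵀ * D * (Dᵀ * Ξ * D)⁻¹ := by
    rw [cov_neg_mulVec hm2, ← hV]
    rw [transpose_mul, transpose_mul, transpose_transpose, hWΞsym, hΞsym]
    simp only [Matrix.mul_assoc]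
  -- part 3
  have part3 : cov P (fun ω => -(((Dᵀ * Vp * D)⁻¹ * Dᵀ * Vp).mulVec (m ω)))
        (fun ω => -(((Dᵀ * Vp * D)⁻¹ * Dᵀ * Vp).mulVec (m ω)))
      = (Dᵀ * Vp * D)⁻¹ := by
    rw [cov_neg_mulVec hm2, ← hV]
    exact hBVB
  refine ⟨part1, ?_, part3⟩
  -- part 2
  have key : cov P (fun ω => -(((Dᵀ * Ξ * D)⁻¹ * Dᵀ * Ξ).mulVec (m ω)))
        (fun ω => -(((Dᵀ * Ξ * D)⁻¹ * Dᵀ * Ξ).mulVec (m ω))) - (Dᵀ * Vp * D)⁻¹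
      = ((Dᵀ * Ξ * D)⁻¹ * Dᵀ * Ξ - (Dᵀ * Vp * D)⁻¹ * Dᵀ * Vp) * V *
          ((Dᵀ * Ξ * D)⁻¹ * Dᵀ * Ξ - (Dᵀ * Vp * D)⁻¹ * Dᵀ * Vp)ᵀ := by
    rw [cov_neg_mulVec hm2, ← hV]
    simp only [transpose_sub, Matrix.sub_mul, Matrix.mul_sub]
    rw [hAVB, hBVA, hBVB]
    abel
  rw [key]
  have hVps : V.PosSemidef := cov_self_posSemidef hm2
  have h := hVps.mul_mul_conjTranspose_same
    ((Dᵀ * Ξ * D)⁻¹ * Dᵀ * Ξ - (Dᵀ * Vp * D)⁻¹ * Dᵀ * Vp)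
  rwa [conjTranspose_eq_transpose_of_trivial] at h
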